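/- arXiv:1006.0166 — 4 statements merged into one kernel-verified Lean document; each statement's English description precedes it below -/
import Mathlib

section
/- Write x^n = ∑_{i=0}^{n} λ_{i,n} F_i(x) in ℤ[x] (this expansion exists and is unique since F_i is monic of degree i for i ≥ 1 and F_0 = 2; take the convention that the coefficients λ_{i,n} are the unique rationals with λ_{i,n} ∈ ℤ for i ≥ 1 given by the recursion). Then λ_{i,n} = 0 whenever i ≢ n (mod 2), and λ_{i,n} < λ_{i-2,n} for all i ≥ 2 with i ≡ n (mod 2) and i ≤ n, n ≥ 1. -/
/-!
The recursion is Pascal's rule in disguise: `λ_{i,n} = C(n, (n + i) / 2)` when `i ≡ n (mod 2)`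
and `0` otherwise (from `x^n = (z + z⁻¹)^n` with `F_i(z + z⁻¹) = z^i + z^{-i}`), the factor `2`
in `λ_{0,n+1} = 2 λ_{1,n}` being the symmetry of the middle of an odd row. Since
`(n + i) / 2 > n / 2` for `i ≥ 1`, the strict decrease is the strict decrease of row `n` of
Pascal's triangle past its middle.
-/

theorem Nat.choose_succ_lt_choose {n k : ℕ} (hn : n ≤ 2 * k) (hk : k ≤ n) :
    n.choose (k + 1) < n.choose k := by
  have hpos : 0 < n.choose k := Nat.choose_pos hk
  refine Nat.lt_of_mul_lt_mul_right (a := k + 1) ?_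
  rw [Nat.choose_succ_right_eq]
  exact Nat.mul_lt_mul_of_pos_left (by omega) hpos

def monomialChebyshevCoeff (n i : ℕ) : ℤ :=
  if Even (n + i) then n.choose ((n + i) / 2) else 0

namespace monomialChebyshevCoeff

theorem zero_zero : monomialChebyshevCoeff 0 0 = 1 := by
  simp [monomialChebyshevCoeff]

theorem zero_succ (i : ℕ) : monomialChebyshevCoeff 0 (i + 1) = 0 := by
  unfold monomialChebyshevCoeff
  split_ifs with h
  · obtain ⟨k, hk⟩ := h
    exact_mod_cast Nat.choose_eq_zero_of_lt (by omega)
  · rfl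

theorem succ_zero (n : ℕ) :
    monomialChebyshevCoeff (n + 1) 0 = 2 * monomialChebyshevCoeff n 1 := by
  simp only [monomialChebyshevCoeff, add_zero]
  rcases Nat.even_or_odd n with hn | ⟨m, rfl⟩
  · have hn' : ¬ Even (n + 1) := by rw [Nat.even_iff] at hn ⊢; omega
    simp [hn']
  · rw [if_pos ⟨m + 1, by ring⟩, if_pos ⟨m + 1, by ring⟩,
      show (2 * m + 1 + 1) / 2 = m + 1 by omega, Nat.choose_succ_succ, Nat.choose_symm_half]
    push_cast
    ring

theorem succ_succ (n i : ℕ) :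
    monomialChebyshevCoeff (n + 1) (i + 1) =
      monomialChebyshevCoeff n i + monomialChebyshevCoeff n (i + 2) := by
  unfold monomialChebyshevCoeff
  by_cases h : Even (n + i)
  · obtain ⟨k, hk⟩ := h
    rw [if_pos ⟨k + 1, by omega⟩, if_pos ⟨k, hk⟩, if_pos ⟨k + 1, by omega⟩,
      show (n + 1 + (i + 1)) / 2 = k + 1 by omega, show (n + i) / 2 = k by omega,
      show (n + (i + 2)) / 2 = k + 1 by omega, Nat.choose_succ_succ, Nat.cast_add]
  · have h₁ : ¬ Even (n + 1 + (i + 1)) := by rw [Nat.even_iff] at h ⊢; omega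
    have h₂ : ¬ Even (n + (i + 2)) := by rw [Nat.even_iff] at h ⊢; omega
    simp [h, h₁, h₂]

theorem eq_zero_of_mod_two_ne {n i : ℕ} (h : i % 2 ≠ n % 2) : monomialChebyshevCoeff n i = 0 := by
  rw [monomialChebyshevCoeff, if_neg (by rw [Nat.even_iff]; omega)]

theorem lt_sub_two {n i : ℕ} (hi : 2 ≤ i) (hin : i ≤ n) (hpar : i % 2 = n % 2) :
    monomialChebyshevCoeff n i < monomialChebyshevCoeff n (i - 2) := by
  rw [monomialChebyshevCoeff, monomialChebyshevCoeff, if_pos (Nat.even_iff.2 (by omega)),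
    if_pos (Nat.even_iff.2 (by omega)), show (n + i) / 2 = (n + (i - 2)) / 2 + 1 by omega]
  exact_mod_cast Nat.choose_succ_lt_choose (by omega) (by omega)

end monomialChebyshevCoeff

theorem eq_monomialChebyshevCoeff_of_rec (l : ℕ → ℕ → ℤ)
    (h00 : l 0 0 = 1) (h0 : ∀ i : ℕ, 1 ≤ i → l i 0 = 0)
    (hrec0 : ∀ n : ℕ, l 0 (n + 1) = 2 * l 1 n)
    (hrec : ∀ n i : ℕ, l (i + 1) (n + 1) = l i n + l (i + 2) n) (n i : ℕ) :
    l i n = monomialChebyshevCoeff n i := by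
  induction n generalizing i with
  | zero =>
    rcases i with _ | i
    · rw [h00, monomialChebyshevCoeff.zero_zero]
    · rw [h0 (i + 1) (by omega), monomialChebyshevCoeff.zero_succ]
  | succ n ih =>
    rcases i with _ | i
    · rw [hrec0, ih, monomialChebyshevCoeff.succ_zero]
    · rw [hrec, ih, ih, monomialChebyshevCoeff.succ_succ]

/-- Let `l i n = λ_{i,n}` be the coefficients of the expansion
`x^n = λ_{0,n}·1 + ∑_{i ≥ 1} λ_{i,n} F_i(x)` of the monomial `x^n` in terms of
the constant `1` and the normalized Chebyshev polynomials of the first kind,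
determined by the recursion `λ_{0,0} = 1`, `λ_{i,0} = 0` for `i ≥ 1`,
`λ_{0,n+1} = 2 λ_{1,n}`, `λ_{1,n+1} = λ_{0,n} + λ_{2,n}`, and
`λ_{i,n+1} = λ_{i-1,n} + λ_{i+1,n}` for `i ≥ 2`.
Then `λ_{i,n} = 0` whenever `i ≢ n (mod 2)`, and `λ_{i,n} < λ_{i-2,n}` for all
`2 ≤ i ≤ n` with `i ≡ n (mod 2)`, `n ≥ 1`. -/
theorem lambda_parity_and_strict_decrease
    (l : ℕ → ℕ → ℤ)
    (h00 : l 0 0 = 1)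
    (h0 : ∀ i : ℕ, 1 ≤ i → l i 0 = 0)
    (hrec0 : ∀ n : ℕ, l 0 (n + 1) = 2 * l 1 n)
    (hrec1 : ∀ n : ℕ, l 1 (n + 1) = l 0 n + l 2 n)
    (hrec : ∀ n i : ℕ, 2 ≤ i → l i (n + 1) = l (i - 1) n + l (i + 1) n) :
    (∀ n i : ℕ, i % 2 ≠ n % 2 → l i n = 0) ∧
      (∀ n i : ℕ, 1 ≤ n → 2 ≤ i → i ≤ n → i % 2 = n % 2 →
        l i n < l (i - 2) n) := by
  have hrec_succ : ∀ n i : ℕ, l (i + 1) (n + 1) = l i n + l (i + 2) n := by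
    rintro n (_ | i)
    · exact hrec1 n
    · exact hrec n (i + 2) (by omega)
  have hl := eq_monomialChebyshevCoeff_of_rec l h00 h0 hrec0 hrec_succ
  refine ⟨fun n i h => ?_, fun n i _ hi hin hpar => ?_⟩
  · rw [hl]
    exact monomialChebyshevCoeff.eq_zero_of_mod_two_ne h
  · rw [hl, hl]
    exact monomialChebyshevCoeff.lt_sub_two hi hin hpar
end

section
/- Let z = (1 + u₁² + u₂²)/(u₁u₂) in the field ℚ(u₁,u₂) of rational functions. Then for every n ≥ 1, the element F_n(z) is a Laurent polynomial in u₁, u₂ with integer coefficients, and its denominator vector is (n, n); that is, F_n(z)·(u₁u₂)^n is a polynomial in u₁, u₂ not divisible by u₁ or u₂. -/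
open Polynomial

/-- Normalized Chebyshev polynomials of the first kind. -/
noncomputable def chebF : ℕ → Polynomial ℤ
  | 0 => 2
  | 1 => X
  | (n + 2) => X * chebF (n + 1) - chebF n

/-- The field `ℚ(u₁,u₂)` of rational functions, realized as the fraction field
of the polynomial ring `ℤ[u₁,u₂]`. -/
noncomputable abbrev RatFunc2 := FractionRing (MvPolynomial (Fin 2) ℤ)

/-- The variables `u₁, u₂` viewed inside `ℚ(u₁,u₂)`. -/
noncomputable def uvar (i : Fin 2) : RatFunc2 :=
  algebraMap (MvPolynomial (Fin 2) ℤ) RatFunc2 (MvPolynomial.X i)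

/-- `z = (1 + u₁² + u₂²)/(u₁u₂)`. -/
noncomputable def zElt : RatFunc2 :=
  (1 + uvar 0 ^ 2 + uvar 1 ^ 2) / (uvar 0 * uvar 1)

/-! Write `z = a/b` with `a = 1 + u₁² + u₂²` and `b = u₁u₂`. Then `b^n F_n(a/b)` obeys the
homogenized recurrence `H_{n+2} = a H_{n+1} - b² H_n`, so it is a polynomial in `u₁, u₂`. Its
constant term is `H_n(1, 0)`, which is `1` for `n ≥ 1` and `2` for `n = 0`, whereas a polynomial
divisible by `u₁` or `u₂` has constant term `0`. -/

section Homogenized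

variable {R S : Type*} [CommRing R] [CommRing S]

/-- The homogenization `b ^ n * F_n (a / b)` of `chebF`. -/
def chebFHomog (a b : R) : ℕ → R
  | 0 => 2
  | 1 => a
  | (n + 2) => a * chebFHomog a b (n + 1) - b ^ 2 * chebFHomog a b n

theorem map_chebFHomog (f : R →+* S) (a b : R) (n : ℕ) :
    f (chebFHomog a b n) = chebFHomog (f a) (f b) n := by
  induction n using Nat.twoStepInduction with
  | zero => simp [chebFHomog, map_ofNat]
  | one => simp [chebFHomog]
  | more n ih ih1 => simp [chebFHomog, ih, ih1]

theorem chebFHomog_one_zero_succ (n : ℕ) : chebFHomog (1 : R) 0 (n + 1) = 1 := by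
  induction n with
  | zero => simp [chebFHomog]
  | succ n ih => simp [chebFHomog, ih]

theorem chebFHomog_one_zero_ne_zero [CharZero R] (n : ℕ) : chebFHomog (1 : R) 0 n ≠ 0 := by
  cases n with
  | zero => simp [chebFHomog]
  | succ n => simp [chebFHomog_one_zero_succ]

/-- Stated for an arbitrary `ℤ`-algebra structure so that it matches the instance `FractionRing`
carries. -/
theorem aeval_div_chebF {K : Type*} [Field K] [Algebra ℤ K] (a : K) {b : K} (hb : b ≠ 0) (n : ℕ) :
    aeval (a / b) (chebF n) = chebFHomog a b n / b ^ n := by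
  induction n using Nat.twoStepInduction with
  | zero => simp [chebF, chebFHomog, map_ofNat]
  | one => simp [chebF, chebFHomog]
  | more n ih ih1 =>
    simp only [chebF, chebFHomog, map_sub, map_mul, aeval_X, ih, ih1]
    field_simp
    ring

end Homogenized

theorem MvPolynomial.constantCoeff_eq_zero_of_X_dvd {σ R : Type*} [CommSemiring R] {i : σ}
    {p : MvPolynomial σ R} (h : X i ∣ p) : constantCoeff p = 0 := by
  obtain ⟨q, rfl⟩ := h
  simp

theorem chebF_z_denominator_general (n : ℕ) :
    ∃ P : MvPolynomial (Fin 2) ℤ,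
      ¬ MvPolynomial.X 0 ∣ P ∧ ¬ MvPolynomial.X 1 ∣ P ∧
      Polynomial.aeval zElt (chebF n) =
        algebraMap (MvPolynomial (Fin 2) ℤ) RatFunc2 P / (uvar 0 * uvar 1) ^ n := by
  let a : MvPolynomial (Fin 2) ℤ := 1 + MvPolynomial.X 0 ^ 2 + MvPolynomial.X 1 ^ 2
  let b : MvPolynomial (Fin 2) ℤ := MvPolynomial.X 0 * MvPolynomial.X 1
  have hP : MvPolynomial.constantCoeff (chebFHomog a b n) ≠ 0 := by
    simpa [map_chebFHomog, a, b] using chebFHomog_one_zero_ne_zero (R := ℤ) n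
  have hb : uvar 0 * uvar 1 ≠ 0 := by
    simp [uvar, MvPolynomial.X_ne_zero]
  refine ⟨chebFHomog a b n, fun h => hP (MvPolynomial.constantCoeff_eq_zero_of_X_dvd h),
    fun h => hP (MvPolynomial.constantCoeff_eq_zero_of_X_dvd h), ?_⟩
  have hz : zElt = algebraMap _ RatFunc2 a / (uvar 0 * uvar 1) := by
    simp [zElt, uvar, a]
  rw [hz, aeval_div_chebF _ hb, map_chebFHomog]
  simp [uvar, b]

/-- For every `n ≥ 1`, `F_n(z)` is a Laurent polynomial in `u₁, u₂` with integer
coefficients and denominator vector `(n, n)`: `F_n(z) = P/(u₁u₂)^n` with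
`P ∈ ℤ[u₁,u₂]` divisible by neither `u₁` nor `u₂`. -/
theorem chebF_z_denominator (n : ℕ) (hn : 1 ≤ n) :
    ∃ P : MvPolynomial (Fin 2) ℤ,
      ¬ MvPolynomial.X 0 ∣ P ∧ ¬ MvPolynomial.X 1 ∣ P ∧
      Polynomial.aeval zElt (chebF n) =
        algebraMap (MvPolynomial (Fin 2) ℤ) RatFunc2 P / (uvar 0 * uvar 1) ^ n :=
  chebF_z_denominator_general n
end

section
/- Let z = (1 + u₁² + u₂²)/(u₁u₂) ∈ ℚ(u₁,u₂). Then for every n ≥ 1, z^n is a Laurent polynomial in u₁,u₂ with denominator vector (n,n): z^n = P(u₁,u₂)/(u₁u₂)^n where P is a polynomial with positive integer coefficients not divisible by u₁ or u₂. -/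
/-!
The numerator `1 + u₁² + u₂²` of `z` is a polynomial with natural coefficients, so its `n`-th
power has positive coefficients, and it takes the value `2` wherever one of the variables is `0`
and the other is `1`, so its `n`-th power is divisible by neither variable.
-/

namespace MvPolynomial

variable {σ R : Type*}

theorem coeff_pos_of_mem_support_map_natCast [CommSemiring R] [PartialOrder R]
    [IsOrderedRing R] (p : MvPolynomial σ ℕ) {d : σ →₀ ℕ}
    (hd : d ∈ (map (Nat.castRingHom R) p).support) :
    0 < coeff d (map (Nat.castRingHom R) p) :=
  lt_of_le_of_ne (by simp only [coeff_map, eq_natCast, Nat.cast_nonneg])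
    (mem_support_iff.mp hd).symm

theorem not_X_dvd_of_eval_ne_zero [CommSemiring R] {p : MvPolynomial σ R} {x : σ → R} {i : σ}
    (hxi : x i = 0) (hp : eval x p ≠ 0) : ¬ X i ∣ p := by
  rintro ⟨q, rfl⟩
  simp [hxi] at hp

end MvPolynomial

open MvPolynomial

noncomputable def zNumerator (R : Type*) [CommSemiring R] : MvPolynomial (Fin 2) R :=
  1 + X 0 ^ 2 + X 1 ^ 2

theorem map_zNumerator {R S : Type*} [CommSemiring R] [CommSemiring S] (f : R →+* S) :
    map f (zNumerator R) = zNumerator S := by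
  simp [zNumerator]

theorem eval_zNumerator_of_eq_zero_of_eq_one {x : Fin 2 → ℤ} {i j : Fin 2} (hij : i ≠ j)
    (hi : x i = 0) (hj : x j = 1) : eval x (zNumerator ℤ) = 2 := by
  fin_cases i <;> fin_cases j <;> simp_all [zNumerator]

theorem zElt_pow (n : ℕ) :
    zElt ^ n =
      algebraMap (MvPolynomial (Fin 2) ℤ) RatFunc2 (zNumerator ℤ ^ n) / (uvar 0 * uvar 1) ^ n := by
  simp [zElt, zNumerator, uvar, div_pow]

theorem z_pow_denominator_general (n : ℕ) :
    ∃ P : MvPolynomial (Fin 2) ℤ,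
      (∀ d ∈ P.support, 0 < MvPolynomial.coeff d P) ∧
      ¬ MvPolynomial.X 0 ∣ P ∧ ¬ MvPolynomial.X 1 ∣ P ∧
      zElt ^ n =
        algebraMap (MvPolynomial (Fin 2) ℤ) RatFunc2 P / (uvar 0 * uvar 1) ^ n := by
  have hmap : zNumerator ℤ ^ n = map (Nat.castRingHom ℤ) (zNumerator ℕ ^ n) := by
    rw [map_pow, map_zNumerator]
  have hnot_dvd {i j : Fin 2} (hij : i ≠ j) : ¬ X i ∣ zNumerator ℤ ^ n := by
    refine not_X_dvd_of_eval_ne_zero (x := Pi.single j 1) (Pi.single_eq_of_ne hij 1) ?_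
    rw [map_pow, eval_zNumerator_of_eq_zero_of_eq_one hij (Pi.single_eq_of_ne hij 1)
      (Pi.single_eq_same j 1)]
    exact pow_ne_zero n two_ne_zero
  refine ⟨zNumerator ℤ ^ n, fun d hd ↦ ?_, hnot_dvd (j := 1) (by decide),
    hnot_dvd (j := 0) (by decide), zElt_pow n⟩
  rw [hmap] at hd ⊢
  exact coeff_pos_of_mem_support_map_natCast _ hd

/-- For every `n ≥ 1`, `z^n` is a Laurent polynomial with denominator vector
`(n,n)`: `z^n = P/(u₁u₂)^n` where `P` is a polynomial with positive integer
coefficients divisible by neither `u₁` nor `u₂`. -/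
theorem z_pow_denominator (n : ℕ) (hn : 1 ≤ n) :
    ∃ P : MvPolynomial (Fin 2) ℤ,
      (∀ d ∈ P.support, 0 < MvPolynomial.coeff d P) ∧
      ¬ MvPolynomial.X 0 ∣ P ∧ ¬ MvPolynomial.X 1 ∣ P ∧
      zElt ^ n =
        algebraMap (MvPolynomial (Fin 2) ℤ) RatFunc2 P / (uvar 0 * uvar 1) ^ n :=
  z_pow_denominator_general n
end

section
/- Let z = (1+u₁²+u₂²)/(u₁u₂). Define the sequence a_n by a_1 = u₁, a_2 = u₂, and a_{n+1}a_{n-1} = a_n² + 1 (the Kronecker cluster variable recursion). Then z·a_n = a_{n-1} + a_{n+1} for all n ≥ 2. -/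
/-!
Multiplying `z·a_n = a_{n-1} + a_{n+1}` by `a_{n+1}` and using the exchange relations at `n` and
`n + 1` gives `a_n` times the identity at `n + 1`, so the identity propagates once the `a_n` are
known not to vanish. They do not, because `x² + 1` has no zero in `ℚ(u₁,u₂)`: a sum of two squares
of integer polynomials vanishes only if both do, as one sees by evaluating at integer points. The
case `n = 2` is the definition of `z`.
-/

theorem MvPolynomial.eq_zero_of_sq_add_sq_eq_zero {σ R : Type*} [CommRing R] [LinearOrder R]
    [IsStrictOrderedRing R] {p q : MvPolynomial σ R} (h : p ^ 2 + q ^ 2 = 0) : q = 0 :=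
  MvPolynomial.funext fun x ↦ by
    have hx := congrArg (eval x) h
    simp only [map_add, map_pow, map_zero] at hx ⊢
    nlinarith [sq_nonneg (eval x p), sq_nonneg (eval x q)]

theorem IsFractionRing.sq_add_one_ne_zero {A K : Type*} [CommRing A] [Field K] [Algebra A K]
    [IsFractionRing A K] (hA : ∀ p q : A, p ^ 2 + q ^ 2 = 0 → q = 0) (x : K) :
    x ^ 2 + 1 ≠ 0 := by
  obtain ⟨p, q, hq, rfl⟩ := IsFractionRing.div_surjective (A := A) x
  have hq' : algebraMap A K q ≠ 0 := (IsLocalization.map_units K ⟨q, hq⟩).ne_zero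
  intro h
  have hpq : algebraMap A K (p ^ 2 + q ^ 2) = 0 := by
    rw [map_add, map_pow, map_pow]
    field_simp at h
    linear_combination h
  rw [← map_zero (algebraMap A K)] at hpq
  exact hq' (by rw [hA p q (IsFractionRing.injective A K hpq), map_zero])

theorem mul_eq_add_of_exchange_relation {R : Type*} [CommRing R] [IsDomain R]
    {x y w v z : R} (hy : y ≠ 0) (hxw : w * x = y ^ 2 + 1) (hyv : v * y = w ^ 2 + 1)
    (hz : z * y = x + w) : z * w = y + v :=
  -- `z w y = w (x + w) = (y² + 1) + w² = y (y + v)`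
  mul_right_cancel₀ hy <| by linear_combination w * hz + hxw - hyv

theorem mul_eq_add_of_exchange_recurrence {R : Type*} [CommRing R] [IsDomain R]
    (hR : ∀ x : R, x ^ 2 + 1 ≠ 0) {a : ℕ → R} {z : R}
    (hrec : ∀ n, 2 ≤ n → a (n + 1) * a (n - 1) = a n ^ 2 + 1)
    (h2 : a 2 ≠ 0) (hbase : z * a 2 = a 1 + a 3) :
    ∀ n, 2 ≤ n → z * a n = a (n - 1) + a (n + 1) := by
  suffices ∀ n, 2 ≤ n → a n ≠ 0 ∧ z * a n = a (n - 1) + a (n + 1) from fun n hn ↦ (this n hn).2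
  intro n hn
  induction n, hn using Nat.le_induction with
  | base => exact ⟨h2, hbase⟩
  | succ n hn ih =>
    have hn1 : a (n + 1) ≠ 0 := fun h0 ↦ hR (a n) (by rw [← hrec n hn, h0, zero_mul])
    refine ⟨hn1, ?_⟩
    rw [Nat.add_sub_cancel]
    exact mul_eq_add_of_exchange_relation ih.1 (hrec n hn)
      (by simpa using hrec (n + 1) (by omega)) ih.2

/-- Let `a_n` be the Kronecker cluster variable sequence: `a₁ = u₁`, `a₂ = u₂`
and `a_{n+1}a_{n-1} = a_n² + 1` for `n ≥ 2`. Then `z·a_n = a_{n-1} + a_{n+1}`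
for all `n ≥ 2`. -/
theorem z_mul_kronecker_cluster_variable
    (a : ℕ → RatFunc2)
    (ha1 : a 1 = uvar 0) (ha2 : a 2 = uvar 1)
    (harec : ∀ n : ℕ, 2 ≤ n → a (n + 1) * a (n - 1) = a n ^ 2 + 1) :
    ∀ n : ℕ, 2 ≤ n → zElt * a n = a (n - 1) + a (n + 1) := by
  have huvar : ∀ i, uvar i ≠ 0 := fun i ↦
    (map_ne_zero_iff _ (IsFractionRing.injective _ _)).mpr (MvPolynomial.X_ne_zero i)
  have ha3 : a 3 * uvar 0 = uvar 1 ^ 2 + 1 := by simpa [ha1, ha2] using harec 2 le_rfl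
  refine mul_eq_add_of_exchange_recurrence
    (IsFractionRing.sq_add_one_ne_zero fun _ _ ↦
      MvPolynomial.eq_zero_of_sq_add_sq_eq_zero (σ := Fin 2) (R := ℤ))
    harec (ha2 ▸ huvar 1) ?_
  rw [ha1, ha2, zElt]
  field_simp [huvar 0, huvar 1]
  linear_combination -ha3
end
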